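/- arXiv:2302.05509 — 2 statements merged into one kernel-verified Lean document; each statement's English description precedes it below -/
import Mathlib

section
/- Let E, F be finite sets, d ≥ 1, and α, β : E → F injective maps with disjoint images. Then the induced maps α_*, β_* : M̃(d,E) → M̃(d,F) are homotopic; explicitly, H(s, Φ) = Φ_{(1−s, s)}^{(α,β)} is a continuous homotopy from α_* to β_* through oriented tropical Plücker vectors. -/
open Finset

noncomputable section

/-! ### Alternating functions and oriented tropical Plücker vectors -/

/-- A function `Φ : E^d → ℝ` is alternating. -/
def IsAlternating {E : Type*} {d : ℕ} (Φ : (Fin d → E) → ℝ) : Prop :=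
  (∀ (σ : Equiv.Perm (Fin d)) (x : Fin d → E),
      Φ (x ∘ σ) = ((Equiv.Perm.sign σ : ℤ) : ℝ) * Φ x) ∧
  ∀ x : Fin d → E, ¬ Function.Injective x → Φ x = 0

/-- The `i`-th term `(-1)^i · Φ(x₁,…,x̂ᵢ,…,x_{d+1}) · Φ(xᵢ,y₁,…,y_{d-1})` of the
oriented (tropical) Plücker relation attached to tuples `X ∈ E^{d+1}`, `Y ∈ E^{d-1}`. -/
def delTerm {E : Type*} {d n : ℕ} (hn : d = n + 1) (Φ : (Fin d → E) → ℝ)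
    (X : Fin (d + 1) → E) (Y : Fin n → E) (i : Fin (d + 1)) : ℝ :=
  (-1 : ℝ) ^ (i : ℕ) * Φ (X ∘ i.succAbove) * Φ (Fin.cons (X i) Y ∘ Fin.cast hn)

/-- `Φ : E^d → ℝ` is an oriented tropical Plücker vector of rank `d` on `E`:
it is alternating, not identically zero, and for every `X ∈ E^{d+1}`, `Y ∈ E^{d-1}`
the list of terms of the Plücker relation is identically zero or its maximum absolute
value is attained both at a positive entry and at a negative entry. -/
def IsOrientedTP {E : Type*} (d : ℕ) (Φ : (Fin d → E) → ℝ) : Prop :=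
  IsAlternating Φ ∧ (∃ x, Φ x ≠ 0) ∧
  ∀ (n : ℕ) (hn : d = n + 1) (X : Fin (d + 1) → E) (Y : Fin n → E),
    (∀ i, delTerm hn Φ X Y i = 0) ∨
    ∃ ip im : Fin (d + 1),
      0 < delTerm hn Φ X Y ip ∧ delTerm hn Φ X Y im < 0 ∧
      (∀ k, |delTerm hn Φ X Y k| ≤ delTerm hn Φ X Y ip) ∧
      ∀ k, |delTerm hn Φ X Y k| ≤ -delTerm hn Φ X Y im

/-- `M̃(d,E)`: the space of oriented tropical Plücker vectors of rank `d` on `E`,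
as a subset of `ℝ^{E^d}`. -/
def Mt (d : ℕ) (E : Type*) : Set ((Fin d → E) → ℝ) := {Φ | IsOrientedTP d Φ}

open Classical in
/-- Pushforward of `Φ : E^d → ℝ` along an (injective) map `α : E → F`. -/
noncomputable def pushforward {E F : Type*} {d : ℕ} (α : E → F) (Φ : (Fin d → E) → ℝ) :
    (Fin d → F) → ℝ :=
  fun y => if h : ∃ x : Fin d → E, ∀ i, y i = α (x i) then Φ h.choose else 0

/-! ### Finsets, ordered tuples, evaluation -/

/-- The increasing enumeration of a `d`-element finite subset of a linearly ordered set. -/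
def finsetTuple {E : Type*} [LinearOrder E] {d : ℕ} (B : Finset E) (h : B.card = d) :
    Fin d → E :=
  fun i => (B.orderIsoOfFin h i : E)

/-- Evaluation of an alternating function on a finite set, via its increasing enumeration
(and `0` if the set does not have the right cardinality). -/
noncomputable def evalOn {E : Type*} [LinearOrder E] {d : ℕ} (χ : (Fin d → E) → ℝ)
    (B : Finset E) : ℝ :=
  if h : B.card = d then χ (finsetTuple B h) else 0

/-! ### Tropical numbers and valuated matroids -/

/-- `−log|x| ∈ 𝕋 = ℝ ∪ {∞}` (with `−log 0 = ∞`). -/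
noncomputable def negLogAbs (x : ℝ) : WithTop ℝ :=
  if x = 0 then ⊤ else ((- Real.log |x| : ℝ) : WithTop ℝ)

/-- The map `𝕋 → ℝ`, `x ↦ e^{−x}` (with `∞ ↦ 0`); it is injective with image `[0,∞)`,
so the topology on `𝕋` making it a homeomorphism onto `[0,∞)` is the topology induced by it. -/
noncomputable def tropToReal : WithTop ℝ → ℝ :=
  WithTop.recTopCoe 0 fun r => Real.exp (-r)

/-- `I_φ(X,Y)`: the set of `i ∈ X \ Y` attaining the minimum of `φ(X∖{i}) + φ(Y∪{i})`. -/
def argminSet {E : Type*} [DecidableEq E] (φ : Finset E → WithTop ℝ) (X Y : Finset E) :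
    Set E :=
  {i | i ∈ X \ Y ∧ ∀ j ∈ X \ Y,
    φ (X.erase i) + φ (insert i Y) ≤ φ (X.erase j) + φ (insert j Y)}

/-- `φ` is a tropical Plücker vector of rank `d`: not identically `∞` on `binom(E,d)`,
and each `I_φ(X,Y)` has cardinality at least `2`. -/
def IsTropPlucker {E : Type*} [DecidableEq E] (d : ℕ) (φ : Finset E → WithTop ℝ) : Prop :=
  (∃ B : Finset E, B.card = d ∧ φ B ≠ ⊤) ∧
  ∀ X Y : Finset E, X.card = d + 1 → Y.card = d - 1 →
    ∃ i ∈ argminSet φ X Y, ∃ j ∈ argminSet φ X Y, i ≠ j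

/-- The (tropical) Plücker coordinates `B ↦ −log|Φ(B)|` of `Φ`. -/
noncomputable def tropOf {E : Type*} [LinearOrder E] {d : ℕ} (Φ : (Fin d → E) → ℝ) :
    Finset E → WithTop ℝ :=
  fun B => negLogAbs (evalOn Φ B)

/-! ### Chirotopes -/

/-- A chirotope of rank `d` on `E`: an alternating `{−1,0,+1}`-valued function,
not identically zero, satisfying the chirotope exchange condition. -/
def IsChirotope {E : Type*} (d : ℕ) (χ : (Fin d → E) → ℝ) : Prop :=
  (∀ x, χ x = -1 ∨ χ x = 0 ∨ χ x = 1) ∧ IsAlternating χ ∧ (∃ x, χ x ≠ 0) ∧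
  ∀ (n : ℕ) (hn : d = n + 1) (X : Fin (d + 1) → E) (Y : Fin n → E),
    (∀ k, delTerm hn χ X Y k = 0) ∨
    ((∃ k, delTerm hn χ X Y k = 1) ∧ ∃ k, delTerm hn χ X Y k = -1)

/-- Compatibility of a chirotope `χ` with a tropical Plücker vector `φ`:
`φ(B) = ∞` iff `χ(B) = 0`, and for every `X ∈ binom(E,d+1)`, `Y ∈ binom(E,d-1)`
(listed in increasing order) there exist indices `i, j` in the argmin set such that the
corresponding chirotope terms have opposite signs. -/
def ChiCompat {E : Type*} [LinearOrder E] (d : ℕ) (χ : (Fin d → E) → ℝ)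
    (φ : Finset E → WithTop ℝ) : Prop :=
  (∀ B : Finset E, B.card = d → (φ B = ⊤ ↔ evalOn χ B = 0)) ∧
  ∀ (n : ℕ) (hn : d = n + 1) (X Y : Finset E) (hX : X.card = d + 1) (hY : Y.card = n),
    ∃ i j : Fin (d + 1),
      (∀ k : Fin (d + 1),
        φ (X.erase (finsetTuple X hX i)) + φ (insert (finsetTuple X hX i) Y) ≤
          φ (X.erase (finsetTuple X hX k)) + φ (insert (finsetTuple X hX k) Y)) ∧
      (∀ k : Fin (d + 1),
        φ (X.erase (finsetTuple X hX j)) + φ (insert (finsetTuple X hX j) Y) ≤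
          φ (X.erase (finsetTuple X hX k)) + φ (insert (finsetTuple X hX k) Y)) ∧
      0 < delTerm hn χ (finsetTuple X hX) (finsetTuple Y hY) i ∧
      delTerm hn χ (finsetTuple X hX) (finsetTuple Y hY) j < 0

/-! ### The cells `C(p,I)` of the Dressian -/

/-- Membership in the cell `C(p,I)`: a tropical Plücker vector with underlying matroid `p`
and initial datum `I`. -/
def IsInC {E : Type*} [DecidableEq E] (d : ℕ) (p : Finset E → Bool)
    (I : Finset E → Finset E → Set E) (φ : Finset E → WithTop ℝ) : Prop :=
  IsTropPlucker d φ ∧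
  (∀ B : Finset E, B.card = d → (p B = true ↔ φ B ≠ ⊤)) ∧
  ∀ X Y : Finset E, X.card = d + 1 → Y.card = d - 1 → argminSet φ X Y = I X Y

/-- The support (set of bases) of a matroid `p : binom(E,d) → {0,1}`. -/
def suppSet {E : Type*} (d : ℕ) (p : Finset E → Bool) : Set (Finset E) :=
  {B | B.card = d ∧ p B = true}

open Classical in
/-- Extend a vector of finite coordinates on `supp(p)` to all of `binom(E,d)` by `∞`. -/
noncomputable def extendFin {E : Type*} (d : ℕ) (p : Finset E → Bool)
    (f : ↥(suppSet d p) → ℝ) : Finset E → WithTop ℝ :=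
  fun B => if h : B ∈ suppSet d p then ((f ⟨B, h⟩ : ℝ) : WithTop ℝ) else ⊤

/-- The cell `C(p,I)`, identified with a subset of `ℝ^{supp(p)}` by recording the finite
coordinates. -/
def CRealCoords {E : Type*} [DecidableEq E] (d : ℕ) (p : Finset E → Bool)
    (I : Finset E → Finset E → Set E) : Set (↥(suppSet d p) → ℝ) :=
  {f | IsInC d p I (extendFin d p f)}

/-- Extend `φ : binom(E,d) → 𝕋` to all finite subsets by `∞`. -/
noncomputable def extendTrop {E : Type*} (d : ℕ)
    (φ : {B : Finset E // B.card = d} → WithTop ℝ) : Finset E → WithTop ℝ :=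
  fun B => if h : B.card = d then φ ⟨B, h⟩ else ⊤

/-- The cell `C(p,I)` as a subset of `𝕋^{binom(E,d)}`. -/
def Cset {E : Type*} [DecidableEq E] (d : ℕ) (p : Finset E → Bool)
    (I : Finset E → Finset E → Set E) : Set ({B : Finset E // B.card = d} → WithTop ℝ) :=
  {φ | IsInC d p I (extendTrop d φ)}

/-- The set of tropical Plücker vectors inside `𝕋^{binom(E,d)}`. -/
def TPVset {E : Type*} [DecidableEq E] (d : ℕ) :
    Set ({B : Finset E // B.card = d} → WithTop ℝ) :=
  {φ | IsTropPlucker d (extendTrop d φ)}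

/-! ### Cells of the space of oriented valuated matroids -/

/-- The cell `D̃(χ,I)`: oriented tropical Plücker vectors with chirotope `χ` and
initial datum `I`. -/
def Dset {E : Type*} [LinearOrder E] (d : ℕ) (χ : (Fin d → E) → ℝ)
    (I : Finset E → Finset E → Set E) : Set ((Fin d → E) → ℝ) :=
  {Φ | IsOrientedTP d Φ ∧ (∀ x, Real.sign (Φ x) = χ x) ∧
    ∀ X Y : Finset E, X.card = d + 1 → Y.card = d - 1 → argminSet (tropOf Φ) X Y = I X Y}

/-- The Plücker coordinates of an alternating function, indexed by `binom(E,d)`. -/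
def toCoords {E : Type*} [LinearOrder E] (d : ℕ) (Φ : (Fin d → E) → ℝ) :
    {B : Finset E // B.card = d} → ℝ :=
  fun B => Φ (finsetTuple B.1 B.2)

/-- The cell `D̃(χ,I)` inside `ℝ^{binom(E,d)}`. -/
def DsetCoords {E : Type*} [LinearOrder E] (d : ℕ) (χ : (Fin d → E) → ℝ)
    (I : Finset E → Finset E → Set E) : Set ({B : Finset E // B.card = d} → ℝ) :=
  toCoords d '' Dset d χ I

/-- `M̃(d,E)` inside `ℝ^{binom(E,d)}`. -/
def MtCoords {E : Type*} [LinearOrder E] (d : ℕ) :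
    Set ({B : Finset E // B.card = d} → ℝ) :=
  toCoords d '' Mt d E

open Classical in
/-- The underlying matroid `|χ|` of a chirotope, as `binom(E,d) → {0,1}`. -/
noncomputable def chiSupp {E : Type*} [LinearOrder E] {d : ℕ} (χ : (Fin d → E) → ℝ) :
    Finset E → Bool :=
  fun B => if evalOn χ B = 0 then false else true

/-- Compatibility of an initial datum `I` with a chirotope `χ`. -/
def InitCompat {E : Type*} [LinearOrder E] (d : ℕ)
    (I : Finset E → Finset E → Set E) (χ : (Fin d → E) → ℝ) : Prop :=
  (∃ φ : Finset E → WithTop ℝ, IsTropPlucker d φ ∧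
      (∀ B : Finset E, B.card = d → (φ B ≠ ⊤ ↔ evalOn χ B ≠ 0)) ∧
      ∀ X Y : Finset E, X.card = d + 1 → Y.card = d - 1 → argminSet φ X Y = I X Y) ∧
  ∀ (n : ℕ) (hn : d = n + 1) (X Y : Finset E) (hX : X.card = d + 1) (hY : Y.card = n),
    (∀ k, delTerm hn χ (finsetTuple X hX) (finsetTuple Y hY) k = 0) ∨
    ∃ kp km : Fin (d + 1),
      finsetTuple X hX kp ∈ I X Y ∧ finsetTuple X hX km ∈ I X Y ∧
      delTerm hn χ (finsetTuple X hX) (finsetTuple Y hY) kp = 1 ∧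
      delTerm hn χ (finsetTuple X hX) (finsetTuple Y hY) km = -1

/-- The maximal initial datum `I_max^χ` compatible with a chirotope `χ`. -/
def Imax {E : Type*} [LinearOrder E] (d : ℕ) (χ : (Fin d → E) → ℝ) :
    Finset E → Finset E → Set E :=
  fun X Y => {x | x ∈ X \ Y ∧ |evalOn χ (X.erase x)| * |evalOn χ (insert x Y)| ≠ 0}

/-! ### The MacPhersonian as a preordered set -/

/-- `τ` is a specialization of `χ`: each Plücker coordinate of `τ` is the corresponding
coordinate of `χ` or `0`. -/
def SpecRel {E : Type*} [LinearOrder E] (d : ℕ) (χ τ : (Fin d → E) → ℝ) : Prop :=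
  ∀ B : Finset E, B.card = d → evalOn τ B = evalOn χ B ∨ evalOn τ B = 0

/-- The equivalence `χ ∼ −χ` on functions `E^d → ℝ`. -/
def ChiSetoid (E : Type*) (d : ℕ) : Setoid ((Fin d → E) → ℝ) where
  r χ τ := τ = χ ∨ τ = -χ
  iseqv := by
    refine ⟨fun x => Or.inl rfl, ?_, ?_⟩
    · rintro x y (rfl | rfl)
      · exact Or.inl rfl
      · exact Or.inr (neg_neg x).symm
    · rintro x y z (rfl | rfl) (rfl | rfl)
      · exact Or.inl rfl
      · exact Or.inr rfl
      · exact Or.inr rfl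
      · exact Or.inl (neg_neg x)

/-- The MacPhersonian: elements are equivalence classes `[χ]` of chirotopes of rank `d` on
`E` under `χ ∼ −χ`. -/
def MacP (E : Type*) (d : ℕ) : Type _ :=
  {q : Quotient (ChiSetoid E d) // ∃ χ, IsChirotope d χ ∧ Quotient.mk (ChiSetoid E d) χ = q}

lemma evalOn_neg {E : Type*} [LinearOrder E] {d : ℕ} (χ : (Fin d → E) → ℝ) (B : Finset E) :
    evalOn (-χ) B = -evalOn χ B := by
  unfold evalOn
  split <;> simp

/-- The specialization preorder on the MacPhersonian. -/
instance MacP.instPreorder (E : Type*) [LinearOrder E] (d : ℕ) : Preorder (MacP E d) where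
  le x y := ∃ a b : (Fin d → E) → ℝ,
    Quotient.mk (ChiSetoid E d) a = x.1 ∧ Quotient.mk (ChiSetoid E d) b = y.1 ∧ SpecRel d a b
  le_refl x := by
    obtain ⟨χ, hχ, hq⟩ := x.2
    exact ⟨χ, χ, hq, hq, fun B _ => Or.inl rfl⟩
  le_trans x y z hxy hyz := by
    obtain ⟨a, b, ha, hb, hab⟩ := hxy
    obtain ⟨b', c, hb', hc, hbc⟩ := hyz
    have comp : ∀ {u v w : (Fin d → E) → ℝ}, SpecRel d u v → SpecRel d v w → SpecRel d u w := by
      intro u v w h1 h2 B hB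
      rcases h2 B hB with h | h
      · rw [h]; exact h1 B hB
      · exact Or.inr h
    have hneg : ∀ {u v : (Fin d → E) → ℝ}, SpecRel d u v → SpecRel d (-u) (-v) := by
      intro u v h B hB
      rw [evalOn_neg, evalOn_neg]
      rcases h B hB with h1 | h1
      · exact Or.inl (by rw [h1])
      · exact Or.inr (by rw [h1, neg_zero])
    have hbb' : b = b' ∨ b = -b' := Quotient.exact (hb'.trans hb.symm)
    rcases hbb' with h | h
    · subst h
      exact ⟨a, c, ha, hc, comp hab hbc⟩
    · have h1 : SpecRel d b (-c) := by
        have := hneg hbc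
        rwa [← h] at this
      refine ⟨a, -c, ha, ?_, comp hab h1⟩
      rw [← hc]
      exact Quotient.sound (Or.inr (neg_neg c).symm)

/-! ### Projectivizations -/

/-- The scaling equivalence on a subset `S ⊆ ℝ^ι`. -/
def scalingSetoid {ι : Type*} (S : Set (ι → ℝ)) : Setoid ↥S where
  r f g := ∃ c : ℝ, c ≠ 0 ∧ (g : ι → ℝ) = c • (f : ι → ℝ)
  iseqv := by
    refine ⟨fun f => ⟨1, one_ne_zero, (one_smul ℝ _).symm⟩, ?_, ?_⟩
    · rintro f g ⟨c, hc, h⟩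
      exact ⟨c⁻¹, inv_ne_zero hc, by rw [h, smul_smul, inv_mul_cancel₀ hc, one_smul]⟩
    · rintro f g h ⟨c, hc, h1⟩ ⟨c', hc', h2⟩
      exact ⟨c' * c, mul_ne_zero hc' hc, by rw [h2, h1, smul_smul]⟩

/-! ### Matroids on the ground set ℕ -/

/-- `Φ : ℕ^d → ℝ` is finitely supported. -/
def FinSupp (d : ℕ) (Φ : (Fin d → ℕ) → ℝ) : Prop :=
  ∃ S : Finset ℕ, ∀ x : Fin d → ℕ, (∃ i, x i ∉ S) → Φ x = 0

/-- `M̃(d,ℕ)`: finitely supported oriented tropical Plücker vectors of rank `d` on `ℕ`. -/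
def MtN (d : ℕ) : Set ((Fin d → ℕ) → ℝ) := {Φ | IsOrientedTP d Φ ∧ FinSupp d Φ}

/-- `M(d,ℕ)`: the projectivization of `M̃(d,ℕ)`, with the quotient topology. -/
abbrev MprojN (d : ℕ) := Quotient (scalingSetoid (MtN d))

/-- Transport along an equality of ranks. -/
def recast {m n : ℕ} (h : m = n) (Φ : (Fin m → ℕ) → ℝ) : (Fin n → ℕ) → ℝ :=
  fun y => Φ (y ∘ Fin.cast h)

/-! ### Matroid sliding -/

open Classical in
/-- The slide `Φ_t^A` of `Φ` along a tuple `A` of injective maps `E → F` with pairwise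
disjoint images, at a point `t` of the standard simplex. -/
noncomputable def slide {E F : Type*} {d n : ℕ} (A : Fin (n + 1) → E → F)
    (t : Fin (n + 1) → ℝ) (Φ : (Fin d → E) → ℝ) : (Fin d → F) → ℝ :=
  fun x =>
    if h : ∀ i, ∃ k e, x i = A k e then
      Φ (fun i => (h i).choose_spec.choose) *
        ∏ k : Fin (n + 1), t k ^ (Finset.univ.filter fun i : Fin d => ∃ e, x i = A k e).card
    else 0

/-! ### Direct sums -/

/-- `D` is the direct sum `Φ₁ ⊕ Φ₂`: the unique alternating function on
`(E₁ ⊔ E₂)^{d₁+d₂}` vanishing on tuples not having exactly `d₁` entries from `E₁` and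
`d₂` entries from `E₂`, and restricting to `(x,y) ↦ Φ₁(x)·Φ₂(y)` on `E₁^{d₁} × E₂^{d₂}`. -/
def IsDirectSum {E₁ E₂ : Type*} {d₁ d₂ : ℕ} (Φ₁ : (Fin d₁ → E₁) → ℝ)
    (Φ₂ : (Fin d₂ → E₂) → ℝ) (D : (Fin (d₁ + d₂) → E₁ ⊕ E₂) → ℝ) : Prop :=
  IsAlternating D ∧
  (∀ z : Fin (d₁ + d₂) → E₁ ⊕ E₂,
      ¬ ((Finset.univ.filter fun i => (z i).isLeft = true).card = d₁ ∧
          (Finset.univ.filter fun i => (z i).isRight = true).card = d₂) → D z = 0) ∧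
  ∀ (x : Fin d₁ → E₁) (y : Fin d₂ → E₂),
    D (Sum.elim (fun a => Sum.inl (x a)) (fun b => Sum.inr (y b)) ∘ finSumFinEquiv.symm) =
      Φ₁ x * Φ₂ y

/-! ### Tropical projective space -/

private lemma trop_add_cancel (w : WithTop ℝ) (lam : ℝ) :
    w = w + (lam : WithTop ℝ) + ((-lam : ℝ) : WithTop ℝ) := by
  induction w using WithTop.recTopCoe with
  | top => simp
  | coe r => rw [← WithTop.coe_add, ← WithTop.coe_add, WithTop.coe_inj]; ring

/-- The action of `(ℝ,+)` on `𝕋^n ∖ {(∞,…,∞)}` by simultaneous translation. -/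
def tropProjSetoid (n : ℕ) : Setoid {x : Fin n → WithTop ℝ // ∃ i, x i ≠ ⊤} where
  r x y := ∃ lam : ℝ, ∀ i, (y : Fin n → WithTop ℝ) i = x.1 i + (lam : WithTop ℝ)
  iseqv := by
    refine ⟨fun x => ⟨0, fun i => by simp⟩, ?_, ?_⟩
    · rintro x y ⟨lam, h⟩
      refine ⟨-lam, fun i => ?_⟩
      rw [h i]
      exact trop_add_cancel _ _
    · rintro x y z ⟨lam, h1⟩ ⟨mu, h2⟩
      refine ⟨lam + mu, fun i => ?_⟩
      rw [h2 i, h1 i, WithTop.coe_add, add_assoc]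

end

/-! On tuples whose entries all lie in the union of the images, `Φ_t^A` is `Φ` of the
preimage tuple times the monomial `∏ᵢ t_{kᵢ}`, where `kᵢ` is the block containing the
`i`-th entry; elsewhere it vanishes. In a Plücker relation the `i`-th term uses the entries of
`X ∖ xᵢ` and of `xᵢ :: Y`, so the monomial `∏ t` is the same for every `i`: the relation for
`Φ_t^A` at `(X, Y)` is the one for `Φ` at the preimages, scaled by a nonnegative constant.
At a vertex `t = e_k` of the simplex the monomial is the indicator of lying in the image of
`A k`, which gives the pushforward `(A k)_*Φ`. -/

open Function

/-- `IsOrientedTP d Φ` imposes exactly this on each `delTerm hn Φ X Y`, definitionally. -/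
def MaxAbsAttainedAtBothSigns {ι : Type*} (f : ι → ℝ) : Prop :=
  (∀ i, f i = 0) ∨
    ∃ ip im, 0 < f ip ∧ f im < 0 ∧ (∀ k, |f k| ≤ f ip) ∧ ∀ k, |f k| ≤ -f im

lemma MaxAbsAttainedAtBothSigns.const_mul {ι : Type*} {f : ι → ℝ}
    (hf : MaxAbsAttainedAtBothSigns f) {C : ℝ} (hC : 0 ≤ C) :
    MaxAbsAttainedAtBothSigns fun i => C * f i := by
  rcases hC.eq_or_lt with rfl | hC
  · exact Or.inl fun i => zero_mul _
  rcases hf with hzero | ⟨ip, im, hp, hm, hip, him⟩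
  · exact Or.inl fun i => by simp only [hzero, mul_zero]
  refine Or.inr ⟨ip, im, mul_pos hC hp, mul_neg_of_pos_of_neg hC hm, fun k => ?_, fun k => ?_⟩
  · rw [abs_mul, abs_of_pos hC]
    exact mul_le_mul_of_nonneg_left (hip k) hC.le
  · rw [abs_mul, abs_of_pos hC, ← mul_neg]
    exact mul_le_mul_of_nonneg_left (him k) hC.le

lemma pushforward_apply_comp {E F : Type*} {d : ℕ} {α : E → F} (hα : Injective α)
    (Φ : (Fin d → E) → ℝ) (x : Fin d → E) : pushforward α Φ (α ∘ x) = Φ x := by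
  have h : ∃ y : Fin d → E, ∀ i, (α ∘ x) i = α (y i) := ⟨x, fun _ => rfl⟩
  rw [pushforward, dif_pos h]
  congr
  exact funext fun i => hα (h.choose_spec i).symm

lemma pushforward_apply_of_not_subset {E F : Type*} {d : ℕ} {α : E → F}
    (Φ : (Fin d → E) → ℝ) {y : Fin d → F} (hy : ¬ Set.range y ⊆ Set.range α) :
    pushforward α Φ y = 0 := by
  rw [pushforward, dif_neg]
  rintro ⟨x, hx⟩
  exact hy (Set.range_subset_iff.2 fun i => ⟨x i, (hx i).symm⟩)

lemma injective_uncurry_vecCons {E F : Type*} {α β : E → F} (hα : Injective α)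
    (hβ : Injective β) (hdisj : Disjoint (Set.range α) (Set.range β)) :
    Injective (uncurry ![α, β]) := by
  rintro ⟨k, e⟩ ⟨k', e'⟩ h
  have hne : ∀ a b, α a ≠ β b := fun a b => Set.disjoint_iff_forall_ne.1 hdisj ⟨a, rfl⟩ ⟨b, rfl⟩
  fin_cases k <;> fin_cases k' <;> simp only [uncurry_apply_pair] at h ⊢
  · simpa using hα h
  · exact (hne _ _ h).elim
  · exact (hne _ _ h.symm).elim
  · simpa using hβ h

lemma range_subset_range_comp_succAbove_union {F : Type*} {d n : ℕ} (hn : d = n + 1)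
    (X : Fin (d + 1) → F) (Y : Fin n → F) (i : Fin (d + 1)) :
    Set.range X ∪ Set.range Y ⊆
      Set.range (X ∘ i.succAbove) ∪ Set.range (Fin.cons (X i) Y ∘ Fin.cast hn) := by
  subst hn
  rintro _ (⟨j, rfl⟩ | ⟨j, rfl⟩)
  · rcases eq_or_ne j i with rfl | hji
    · exact Or.inr ⟨0, by simp⟩
    · obtain ⟨m, rfl⟩ := Fin.exists_succAbove_eq hji
      exact Or.inl ⟨m, rfl⟩
  · exact Or.inr ⟨j.succ, by simp⟩

section Slide

variable {E F : Type*} {d n : ℕ} {A : Fin (n + 1) → E → F}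

lemma slide_apply_of_not_subset (t : Fin (n + 1) → ℝ) (Φ : (Fin d → E) → ℝ)
    {x : Fin d → F} (hx : ¬ Set.range x ⊆ Set.range (uncurry A)) : slide A t Φ x = 0 := by
  rw [slide, dif_neg]
  exact fun h => hx <| Set.range_subset_iff.2 fun i =>
    ⟨((h i).choose, (h i).choose_spec.choose), (h i).choose_spec.choose_spec.symm⟩

lemma slide_apply_comp (hA : Injective (uncurry A)) (t : Fin (n + 1) → ℝ)
    (Φ : (Fin d → E) → ℝ) (p : Fin d → Fin (n + 1) × E) :
    slide A t Φ (uncurry A ∘ p) = Φ (Prod.snd ∘ p) * ∏ i, t (p i).1 := by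
  have hx : ∀ i, ∃ k e, (uncurry A ∘ p) i = A k e := fun i => ⟨(p i).1, (p i).2, rfl⟩
  have hchoose : ∀ i, ((hx i).choose, (hx i).choose_spec.choose) = p i :=
    fun i => hA (hx i).choose_spec.choose_spec.symm
  have hblock : ∀ i k, (∃ e, (uncurry A ∘ p) i = A k e) ↔ (p i).1 = k := fun i k =>
    ⟨fun ⟨e, he⟩ => congrArg Prod.fst (@hA (p i) (k, e) he), fun h => ⟨(p i).2, by rw [← h]; rfl⟩⟩
  rw [slide, dif_pos hx]
  congr 1
  · exact congrArg Φ (funext fun i => congrArg Prod.snd (hchoose i))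
  · rw [← Finset.prod_fiberwise' Finset.univ (fun i => (p i).1) t]
    simp only [hblock, Finset.prod_const]

lemma isAlternating_slide (hA : Injective (uncurry A)) (t : Fin (n + 1) → ℝ)
    {Φ : (Fin d → E) → ℝ} (hΦ : IsAlternating Φ) : IsAlternating (slide A t Φ) := by
  refine ⟨fun σ x => ?_, fun x hx => ?_⟩
  · by_cases hx : Set.range x ⊆ Set.range (uncurry A)
    · obtain ⟨p, rfl⟩ := Set.range_subset_range_iff_exists_comp.1 hx
      have hprod : ∏ i, t ((p ∘ σ) i).1 = ∏ i, t (p i).1 := Equiv.prod_comp σ fun i => t (p i).1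
      rw [comp_assoc, slide_apply_comp hA, slide_apply_comp hA, hprod,
        show Prod.snd ∘ (p ∘ σ) = (Prod.snd ∘ p) ∘ σ from rfl, hΦ.1]
      ring
    · have hxσ : ¬ Set.range (x ∘ σ) ⊆ Set.range (uncurry A) := by
        rwa [Set.range_comp, σ.range_eq_univ, Set.image_univ]
      rw [slide_apply_of_not_subset t Φ hx, slide_apply_of_not_subset t Φ hxσ, mul_zero]
  · by_cases hxA : Set.range x ⊆ Set.range (uncurry A)
    · obtain ⟨p, rfl⟩ := Set.range_subset_range_iff_exists_comp.1 hxA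
      rw [slide_apply_comp hA, hΦ.2 _ fun hp => hx (hA.comp hp.of_comp), zero_mul]
    · exact slide_apply_of_not_subset t Φ hxA

lemma delTerm_slide_comp (hA : Injective (uncurry A)) (t : Fin (n + 1) → ℝ)
    (Φ : (Fin d → E) → ℝ) {m : ℕ} (hm : d = m + 1) (p : Fin (d + 1) → Fin (n + 1) × E)
    (q : Fin m → Fin (n + 1) × E) (i : Fin (d + 1)) :
    delTerm hm (slide A t Φ) (uncurry A ∘ p) (uncurry A ∘ q) i =
      ((∏ j, t (p j).1) * ∏ j, t (q j).1) * delTerm hm Φ (Prod.snd ∘ p) (Prod.snd ∘ q) i := by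
  have hcons : Fin.cons (uncurry A (p i)) (uncurry A ∘ q) ∘ Fin.cast hm =
      uncurry A ∘ (Fin.cons (p i) q ∘ Fin.cast hm) := by
    rw [← Fin.comp_cons]; rfl
  have hprod : ∏ j, t ((Fin.cons (p i) q ∘ Fin.cast hm) j).1 = t (p i).1 * ∏ j, t (q j).1 := by
    simpa [Fin.prod_univ_succ] using
      Fin.prod_congr' (fun j => t ((Fin.cons (p i) q : Fin (m + 1) → _) j).1) hm
  rw [delTerm, delTerm, comp_apply, hcons, comp_assoc, slide_apply_comp hA,
    slide_apply_comp hA, hprod, Fin.prod_univ_succAbove (fun j => t (p j).1) i]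
  simp only [← comp_assoc, Fin.comp_cons, comp_apply]
  ring

lemma delTerm_slide_eq_zero (t : Fin (n + 1) → ℝ) (Φ : (Fin d → E) → ℝ) {m : ℕ}
    (hm : d = m + 1) {X : Fin (d + 1) → F} {Y : Fin m → F}
    (hXY : ¬ Set.range X ∪ Set.range Y ⊆ Set.range (uncurry A)) (i : Fin (d + 1)) :
    delTerm hm (slide A t Φ) X Y i = 0 := by
  have h : ¬ Set.range (X ∘ i.succAbove) ∪ Set.range (Fin.cons (X i) Y ∘ Fin.cast hm) ⊆
      Set.range (uncurry A) :=
    fun hsub => hXY ((range_subset_range_comp_succAbove_union hm X Y i).trans hsub)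
  rw [Set.union_subset_iff, not_and_or] at h
  rcases h with h | h <;> simp only [delTerm, slide_apply_of_not_subset t Φ h, mul_zero, zero_mul]

lemma isOrientedTP_slide (hA : Injective (uncurry A)) {t : Fin (n + 1) → ℝ}
    (ht : t ∈ stdSimplex ℝ (Fin (n + 1))) {Φ : (Fin d → E) → ℝ} (hΦ : IsOrientedTP d Φ) :
    IsOrientedTP d (slide A t Φ) := by
  obtain ⟨halt, ⟨x, hx⟩, hrel⟩ := hΦ
  refine ⟨isAlternating_slide hA t halt, ?_, fun m hm X Y => ?_⟩
  · obtain ⟨k, -, hk⟩ := Finset.exists_ne_zero_of_sum_ne_zero (ht.2.symm ▸ one_ne_zero)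
    refine ⟨uncurry A ∘ fun i => (k, x i), ?_⟩
    simp only [slide_apply_comp hA, Finset.prod_const]
    exact mul_ne_zero hx (pow_ne_zero _ hk)
  show MaxAbsAttainedAtBothSigns (delTerm hm (slide A t Φ) X Y)
  by_cases hXY : Set.range X ∪ Set.range Y ⊆ Set.range (uncurry A)
  · rw [Set.union_subset_iff] at hXY
    obtain ⟨p, rfl⟩ := Set.range_subset_range_iff_exists_comp.1 hXY.1
    obtain ⟨q, rfl⟩ := Set.range_subset_range_iff_exists_comp.1 hXY.2
    have hC : 0 ≤ (∏ j, t (p j).1) * ∏ j, t (q j).1 :=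
      mul_nonneg (Finset.prod_nonneg fun j _ => ht.1 _) (Finset.prod_nonneg fun j _ => ht.1 _)
    rw [funext (delTerm_slide_comp hA t Φ hm p q)]
    exact MaxAbsAttainedAtBothSigns.const_mul (hrel m hm (Prod.snd ∘ p) (Prod.snd ∘ q)) hC
  · exact Or.inl (delTerm_slide_eq_zero t Φ hm hXY)

lemma continuous_slide (A : Fin (n + 1) → E → F) :
    Continuous fun p : (Fin (n + 1) → ℝ) × ((Fin d → E) → ℝ) => slide A p.1 p.2 := by
  refine continuous_pi fun x => ?_
  unfold slide
  split_ifs <;> fun_prop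

lemma slide_single (hA : Injective (uncurry A)) (k : Fin (n + 1)) (Φ : (Fin d → E) → ℝ) :
    slide A (Pi.single k 1) Φ = pushforward (A k) Φ := by
  funext x
  by_cases hx : Set.range x ⊆ Set.range (uncurry A)
  · obtain ⟨p, rfl⟩ := Set.range_subset_range_iff_exists_comp.1 hx
    rw [slide_apply_comp hA]
    by_cases hk : ∀ i, (p i).1 = k
    · have hAk : Injective (A k) := fun e e' h => congrArg Prod.snd (@hA (k, e) (k, e') h)
      have hp : uncurry A ∘ p = A k ∘ Prod.snd ∘ p := funext fun i => by
        rw [comp_apply, ← hk i]; rfl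
      rw [hp, pushforward_apply_comp hAk]
      simp [hk]
    · obtain ⟨i, hi⟩ := not_forall.1 hk
      rw [Finset.prod_eq_zero (Finset.mem_univ i) (by simp [hi]), mul_zero,
        pushforward_apply_of_not_subset]
      rintro hsub
      obtain ⟨e, he⟩ := hsub ⟨i, rfl⟩
      exact hi (congrArg Prod.fst (@hA (p i) (k, e) he.symm))
  · rw [slide_apply_of_not_subset _ Φ hx, pushforward_apply_of_not_subset]
    exact fun hsub => hx (hsub.trans (Set.range_subset_iff.2 fun e => ⟨(k, e), rfl⟩))

end Slide

theorem statement4_general {E F : Type*} (d : ℕ)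
    (α β : E → F) (hα : Function.Injective α) (hβ : Function.Injective β)
    (hdisj : Disjoint (Set.range α) (Set.range β)) :
    (∀ s ∈ Set.Icc (0:ℝ) 1, ∀ Φ ∈ Mt d E, slide (n := 1) ![α, β] ![1 - s, s] Φ ∈ Mt d F) ∧
    Continuous (fun p : ↥(Set.Icc (0:ℝ) 1) × ↥(Mt d E) =>
      slide (n := 1) ![α, β] ![1 - (p.1 : ℝ), (p.1 : ℝ)] (p.2 : (Fin d → E) → ℝ)) ∧
    (∀ Φ ∈ Mt d E, slide (n := 1) ![α, β] ![1 - (0:ℝ), (0:ℝ)] Φ = pushforward α Φ) ∧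
    (∀ Φ ∈ Mt d E, slide (n := 1) ![α, β] ![1 - (1:ℝ), (1:ℝ)] Φ = pushforward β Φ) := by
  have hA := injective_uncurry_vecCons hα hβ hdisj
  have hvertex0 : ![1 - (0:ℝ), 0] = Pi.single 0 1 := by ext i; fin_cases i <;> simp
  have hvertex1 : ![1 - (1:ℝ), 1] = Pi.single 1 1 := by ext i; fin_cases i <;> simp
  refine ⟨fun s hs Φ hΦ => isOrientedTP_slide hA ((stdSimplexEquivIcc ℝ).symm ⟨s, hs⟩).2 hΦ,
    (continuous_slide ![α, β]).comp (f := fun p : ↥(Set.Icc (0:ℝ) 1) × ↥(Mt d E) =>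
      (![1 - (p.1 : ℝ), (p.1 : ℝ)], (p.2 : (Fin d → E) → ℝ))) (by fun_prop),
    fun Φ _ => ?_, fun Φ _ => ?_⟩
  · rw [hvertex0]
    exact slide_single hA 0 Φ
  · rw [hvertex1]
    exact slide_single hA 1 Φ

theorem statement4 {E F : Type*} [Fintype E] [Fintype F] (d : ℕ) (hd : 1 ≤ d)
    (α β : E → F) (hα : Function.Injective α) (hβ : Function.Injective β)
    (hdisj : Disjoint (Set.range α) (Set.range β)) :
    (∀ s ∈ Set.Icc (0:ℝ) 1, ∀ Φ ∈ Mt d E, slide (n := 1) ![α, β] ![1 - s, s] Φ ∈ Mt d F) ∧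
    Continuous (fun p : ↥(Set.Icc (0:ℝ) 1) × ↥(Mt d E) =>
      slide (n := 1) ![α, β] ![1 - (p.1 : ℝ), (p.1 : ℝ)] (p.2 : (Fin d → E) → ℝ)) ∧
    (∀ Φ ∈ Mt d E, slide (n := 1) ![α, β] ![1 - (0:ℝ), (0:ℝ)] Φ = pushforward α Φ) ∧
    (∀ Φ ∈ Mt d E, slide (n := 1) ![α, β] ![1 - (1:ℝ), (1:ℝ)] Φ = pushforward β Φ) :=
  statement4_general d α β hα hβ hdisj
end

section
/- Let E be a finite set, d ≥ 1, and let α, β : E → ℕ be injective maps such that both ℕ ∖ α(E) and ℕ ∖ β(E) are infinite. Then the induced maps α_*, β_* : M̃(d,E) → M̃(d,ℕ) are homotopic. -/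
open Finset

/-! Choose an injection `γ : E → ℕ` whose image avoids those of `α` and `β`; this is possible
because `E` is finite. For injections `δ, γ` with disjoint images, slide `δ_* Φ` onto `γ_* Φ`
through `(δ ⊔ γ)_* Φ_t`, where `Φ_t` is the pullback of `Φ` to tuples in `E ⊔ E` scaled by
`(1 - t)^a t^b` when the tuple has `a` entries in the first copy and `b` in the second.
Every term of a Plücker relation of `Φ_t` is the corresponding term for `Φ` times one and the
same nonnegative constant, so the sign condition survives and `Φ_t` stays in `M̃(d, E ⊔ E)`.
Hence `α_* ≃ γ_* ≃ β_*`. -/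

open Function

def IsSignBalanced {m : ℕ} (T : Fin m → ℝ) : Prop :=
  (∀ i, T i = 0) ∨
    ∃ ip im, 0 < T ip ∧ T im < 0 ∧ (∀ k, |T k| ≤ T ip) ∧ ∀ k, |T k| ≤ -T im

theorem IsSignBalanced.const_mul {m : ℕ} {T : Fin m → ℝ} (hT : IsSignBalanced T) {c : ℝ}
    (hc : 0 ≤ c) : IsSignBalanced fun i => c * T i := by
  rcases hc.eq_or_lt with rfl | hc
  · exact Or.inl fun i => zero_mul _
  rcases hT with hzero | ⟨ip, im, hpos, hneg, hmax, hmin⟩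
  · exact Or.inl fun i => by simp only [hzero, mul_zero]
  refine Or.inr ⟨ip, im, mul_pos hc hpos, mul_neg_of_pos_of_neg hc hneg,
    fun k => ?_, fun k => ?_⟩
  · rw [abs_mul, abs_of_pos hc]
    exact mul_le_mul_of_nonneg_left (hmax k) hc.le
  · rw [abs_mul, abs_of_pos hc, ← mul_neg]
    exact mul_le_mul_of_nonneg_left (hmin k) hc.le

theorem isOrientedTP_iff {E : Type*} {d : ℕ} {Φ : (Fin d → E) → ℝ} :
    IsOrientedTP d Φ ↔ IsAlternating Φ ∧ (∃ x, Φ x ≠ 0) ∧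
      ∀ (n : ℕ) (hn : d = n + 1) X Y, IsSignBalanced (delTerm hn Φ X Y) :=
  Iff.rfl

section Plucker

variable {E F : Type*} {d n : ℕ} (hn : d = n + 1)

theorem delTerm_comp (α : E → F) (Φ : (Fin d → F) → ℝ) (X : Fin (d + 1) → E)
    (Y : Fin n → E) (i : Fin (d + 1)) :
    delTerm hn Φ (α ∘ X) (α ∘ Y) i = delTerm hn (fun x => Φ (α ∘ x)) X Y i := by
  simp only [delTerm, comp_apply, ← Fin.comp_cons, comp_assoc]

theorem delTerm_mul_prod (w : E → ℝ) (Φ : (Fin d → E) → ℝ) (X : Fin (d + 1) → E)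
    (Y : Fin n → E) (i : Fin (d + 1)) :
    delTerm hn (fun x => Φ x * ∏ k, w (x k)) X Y i =
      ((∏ k, w (X k)) * ∏ j, w (Y j)) * delTerm hn Φ X Y i := by
  have hX : ∏ k, w (X k) = w (X i) * ∏ k, w (X (i.succAbove k)) :=
    Fin.prod_univ_succAbove (fun k => w (X k)) i
  have hcons : ∏ k : Fin d, w ((Fin.cons (X i) Y : Fin (n + 1) → E) (Fin.cast hn k)) =
      w (X i) * ∏ j, w (Y j) := by
    refine (Equiv.prod_comp (finCongr hn) fun m => w ((Fin.cons (X i) Y : _ → E) m)).trans ?_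
    simp [Fin.prod_univ_succ]
  simp only [delTerm, hcons, comp_apply, hX]
  ring

theorem delTerm_eq_zero_of_not_forall_mem {S : Set E} {Φ : (Fin d → E) → ℝ}
    (hΦ : ∀ x, Φ x ≠ 0 → ∀ i, x i ∈ S) {X : Fin (d + 1) → E} {Y : Fin n → E}
    (hXY : ¬ ((∀ j, X j ∈ S) ∧ ∀ j, Y j ∈ S)) (i : Fin (d + 1)) :
    delTerm hn Φ X Y i = 0 := by
  by_contra hne
  simp only [delTerm, mul_ne_zero_iff] at hne
  have hdel := hΦ _ hne.1.2
  have hcons := hΦ _ hne.2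
  refine hXY ⟨fun j => ?_, fun j => by simpa using hcons (Fin.cast hn.symm j.succ)⟩
  rcases eq_or_ne j i with rfl | hji
  · simpa using hcons (Fin.cast hn.symm 0)
  · obtain ⟨k, rfl⟩ := Fin.exists_succAbove_eq hji
    exact hdel k

end Plucker

section Pushforward

variable {E F : Type*} {d : ℕ} {α : E → F} {Φ : (Fin d → E) → ℝ}

theorem pushforward_comp_apply (hα : Injective α) (Φ : (Fin d → E) → ℝ) (x : Fin d → E) :
    pushforward α Φ (α ∘ x) = Φ x := by
  have h : ∃ x' : Fin d → E, ∀ i, (α ∘ x) i = α (x' i) := ⟨x, fun _ => rfl⟩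
  rw [pushforward, dif_pos h, show h.choose = x from funext fun i => hα (h.choose_spec i).symm]

theorem pushforward_eq_zero {y : Fin d → F} (hy : ¬ ∀ i, y i ∈ Set.range α) :
    pushforward α Φ y = 0 :=
  dif_neg fun ⟨x, hx⟩ => hy fun i => ⟨x i, (hx i).symm⟩

theorem forall_mem_range_of_pushforward_ne_zero {y : Fin d → F}
    (hy : pushforward α Φ y ≠ 0) : ∀ i, y i ∈ Set.range α :=
  not_not.1 (mt pushforward_eq_zero hy)

theorem exists_comp_eq_of_forall_mem_range {ι : Type*} {y : ι → F}
    (hy : ∀ i, y i ∈ Set.range α) : ∃ x, α ∘ x = y :=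
  Set.range_subset_range_iff_exists_comp.1 (Set.range_subset_iff.2 hy) |>.imp fun _ h => h.symm

theorem pushforward_pushforward {G : Type*} {ι : F → G} (hι : Injective ι) (hα : Injective α)
    (Φ : (Fin d → E) → ℝ) :
    pushforward ι (pushforward α Φ) = pushforward (ι ∘ α) Φ := by
  funext y
  by_cases hy : ∀ i, y i ∈ Set.range ι
  · obtain ⟨z, rfl⟩ := exists_comp_eq_of_forall_mem_range hy
    rw [pushforward_comp_apply hι]
    by_cases hz : ∀ i, z i ∈ Set.range α
    · obtain ⟨x, rfl⟩ := exists_comp_eq_of_forall_mem_range hz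
      rw [pushforward_comp_apply hα, ← comp_assoc, pushforward_comp_apply (hι.comp hα)]
    · refine (pushforward_eq_zero hz).trans (pushforward_eq_zero fun h => hz fun i => ?_).symm
      obtain ⟨e, he⟩ := h i
      exact ⟨e, hι he⟩
  · refine (pushforward_eq_zero hy).trans (pushforward_eq_zero fun h => hy fun i => ?_).symm
    obtain ⟨e, he⟩ := h i
    exact ⟨α e, he⟩

theorem continuous_pushforward (α : E → F) :
    Continuous (pushforward α : ((Fin d → E) → ℝ) → (Fin d → F) → ℝ) := by
  refine continuous_pi fun y => ?_
  by_cases h : ∃ x : Fin d → E, ∀ i, y i = α (x i)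
  · simp only [pushforward, dif_pos h]
    exact continuous_apply _
  · simp only [pushforward, dif_neg h]
    exact continuous_const

theorem IsAlternating.pushforward (hα : Injective α) (hΦ : IsAlternating Φ) :
    IsAlternating (pushforward α Φ) := by
  refine ⟨fun σ y => ?_, fun y hy => ?_⟩
  · by_cases h : ∀ i, y i ∈ Set.range α
    · obtain ⟨x, rfl⟩ := exists_comp_eq_of_forall_mem_range h
      rw [comp_assoc, pushforward_comp_apply hα, pushforward_comp_apply hα, hΦ.1]
    · rw [pushforward_eq_zero h, pushforward_eq_zero fun h' => h fun i => by
        simpa using h' (σ⁻¹ i), mul_zero]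
  · by_cases h : ∀ i, y i ∈ Set.range α
    · obtain ⟨x, rfl⟩ := exists_comp_eq_of_forall_mem_range h
      rw [pushforward_comp_apply hα]
      exact hΦ.2 x fun hx => hy (hα.comp hx)
    · exact pushforward_eq_zero h

theorem IsOrientedTP.pushforward (hα : Injective α) (hΦ : IsOrientedTP d Φ) :
    IsOrientedTP d (pushforward α Φ) := by
  obtain ⟨halt, ⟨x₀, hx₀⟩, hrel⟩ := isOrientedTP_iff.1 hΦ
  refine isOrientedTP_iff.2 ⟨halt.pushforward hα, ⟨α ∘ x₀, ?_⟩, fun n hn X Y => ?_⟩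
  · rwa [pushforward_comp_apply hα]
  by_cases hXY : (∀ j, X j ∈ Set.range α) ∧ ∀ j, Y j ∈ Set.range α
  · obtain ⟨X', rfl⟩ := exists_comp_eq_of_forall_mem_range hXY.1
    obtain ⟨Y', rfl⟩ := exists_comp_eq_of_forall_mem_range hXY.2
    have hterms :
        delTerm hn (_root_.pushforward α Φ) (α ∘ X') (α ∘ Y') = delTerm hn Φ X' Y' :=
      funext fun i => by simp only [delTerm_comp, pushforward_comp_apply hα]
    exact hterms ▸ hrel n hn X' Y'
  · exact Or.inl (delTerm_eq_zero_of_not_forall_mem hn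
      (fun _ => forall_mem_range_of_pushforward_ne_zero) hXY)

theorem pushforward_mem_MtN [Finite E] {α : E → ℕ} (hα : Injective α)
    (hΦ : IsOrientedTP d Φ) : pushforward α Φ ∈ MtN d := by
  have := Fintype.ofFinite E
  refine ⟨hΦ.pushforward hα, univ.image α,
    fun y ⟨i, hi⟩ => pushforward_eq_zero fun h => hi ?_⟩
  obtain ⟨e, he⟩ := h i
  exact he ▸ mem_image_of_mem α (mem_univ e)

end Pushforward

section Reweight

variable {G E : Type*} {d : ℕ}

def reweight (π : G → E) (w : G → ℝ) (Φ : (Fin d → E) → ℝ) : (Fin d → G) → ℝ :=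
  fun z => Φ (π ∘ z) * ∏ i, w (z i)

variable {π : G → E} {w : G → ℝ} {Φ : (Fin d → E) → ℝ}

theorem IsAlternating.reweight (hΦ : IsAlternating Φ) : IsAlternating (reweight π w Φ) := by
  refine ⟨fun σ z => ?_, fun z hz => ?_⟩
  · simp only [_root_.reweight, ← comp_assoc, hΦ.1, comp_apply,
      Equiv.prod_comp σ fun i => w (z i)]
    ring
  · rw [_root_.reweight, hΦ.2 _ fun h => hz h.of_comp, zero_mul]

theorem IsOrientedTP.reweight (hΦ : IsOrientedTP d Φ) (hw : ∀ g, 0 ≤ w g)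
    (hsec : ∀ e, ∃ g, π g = e ∧ w g ≠ 0) : IsOrientedTP d (reweight π w Φ) := by
  obtain ⟨halt, ⟨x₀, hx₀⟩, hrel⟩ := isOrientedTP_iff.1 hΦ
  refine isOrientedTP_iff.2 ⟨halt.reweight, ?_, fun n hn Z W => ?_⟩
  · choose s hπs hws using hsec
    refine ⟨s ∘ x₀, mul_ne_zero ?_ (prod_ne_zero_iff.2 fun i _ => hws _)⟩
    rwa [← comp_assoc, show π ∘ s = id from funext hπs, id_comp]
  · have hterms : delTerm hn (_root_.reweight π w Φ) Z W =
        fun i => ((∏ k, w (Z k)) * ∏ j, w (W j)) * delTerm hn Φ (π ∘ Z) (π ∘ W) i :=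
      funext fun i => by rw [delTerm_comp, ← delTerm_mul_prod]; rfl
    rw [hterms]
    exact (hrel n hn _ _).const_mul
      (mul_nonneg (prod_nonneg fun k _ => hw _) (prod_nonneg fun j _ => hw _))

theorem reweight_eq_pushforward {s : E → G} (hs : LeftInverse π s) (hw₁ : ∀ e, w (s e) = 1)
    (hw₀ : ∀ g ∉ Set.range s, w g = 0) : reweight π w Φ = pushforward s Φ := by
  funext z
  by_cases hz : ∀ i, z i ∈ Set.range s
  · obtain ⟨x, rfl⟩ := exists_comp_eq_of_forall_mem_range hz
    simp only [reweight, pushforward_comp_apply hs.injective, ← comp_assoc, hs.comp_eq_id,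
      id_comp, comp_apply, hw₁, prod_const_one, mul_one]
  · obtain ⟨i, hi⟩ := not_forall.1 hz
    rw [pushforward_eq_zero fun h => hi (h i), reweight,
      prod_eq_zero (mem_univ i) (hw₀ _ hi), mul_zero]

theorem continuous_reweight {T : Type*} [TopologicalSpace T] (w : T → G → ℝ)
    (hw : ∀ g, Continuous fun t => w t g) :
    Continuous fun p : T × ((Fin d → E) → ℝ) => reweight π (w p.1) p.2 :=
  continuous_pi fun z => ((continuous_apply _).comp continuous_snd).mul <|
    continuous_finsetProd _ fun i _ => (hw (z i)).comp continuous_fst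

end Reweight

section Slide

variable {E : Type*} {d : ℕ}

def slideWeight (t : ℝ) : E ⊕ E → ℝ := Sum.elim (fun _ => 1 - t) (fun _ => t)

def slideVector (t : ℝ) (Φ : (Fin d → E) → ℝ) : (Fin d → E ⊕ E) → ℝ :=
  reweight (Sum.elim id id) (slideWeight t) Φ

theorem continuous_slideVector :
    Continuous fun p : ℝ × ((Fin d → E) → ℝ) => slideVector p.1 p.2 :=
  continuous_reweight slideWeight fun g => by
    cases g <;> simp only [slideWeight, Sum.elim_inl, Sum.elim_inr] <;> fun_prop

theorem IsOrientedTP.slideVector {Φ : (Fin d → E) → ℝ} (hΦ : IsOrientedTP d Φ) {t : ℝ}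
    (ht : t ∈ unitInterval) : IsOrientedTP d (slideVector t Φ) := by
  refine hΦ.reweight (Sum.rec (fun _ => sub_nonneg.2 ht.2) fun _ => ht.1) fun e => ?_
  rcases eq_or_ne t 0 with rfl | ht₀
  · exact ⟨Sum.inl e, rfl, by simp [slideWeight]⟩
  · exact ⟨Sum.inr e, rfl, ht₀⟩

theorem slideVector_zero (Φ : (Fin d → E) → ℝ) :
    slideVector 0 Φ = pushforward Sum.inl Φ := by
  refine reweight_eq_pushforward (fun _ => rfl) (fun _ => sub_zero 1) ?_
  rintro (e | e) he
  · exact absurd ⟨e, rfl⟩ he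
  · rfl

theorem slideVector_one (Φ : (Fin d → E) → ℝ) :
    slideVector 1 Φ = pushforward Sum.inr Φ := by
  refine reweight_eq_pushforward (fun _ => rfl) (fun _ => rfl) ?_
  rintro (e | e) he
  · exact sub_self 1
  · exact absurd ⟨e, rfl⟩ he

end Slide

section Homotopy

variable {E : Type*} [Finite E] {d : ℕ}

noncomputable def pushforwardMap {α : E → ℕ} (hα : Injective α) : C(Mt d E, MtN d) where
  toFun Φ := ⟨pushforward α Φ, pushforward_mem_MtN hα Φ.2⟩
  continuous_toFun := ((continuous_pushforward α).comp continuous_subtype_val).subtype_mk _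

theorem homotopic_pushforwardMap {δ γ : E → ℕ} (hδ : Injective δ) (hγ : Injective γ)
    (hδγ : ∀ a b, δ a ≠ γ b) :
    (pushforwardMap (d := d) hδ).Homotopic (pushforwardMap hγ) := by
  have hι := hδ.sumElim hγ hδγ
  refine ⟨⟨⟨fun p => ⟨pushforward (Sum.elim δ γ) (slideVector p.1 p.2),
      pushforward_mem_MtN hι (p.2.2.slideVector p.1.2)⟩, ?_⟩,
      fun Φ => Subtype.ext ?_, fun Φ => Subtype.ext ?_⟩⟩
  · exact ((continuous_pushforward _).comp <| continuous_slideVector.comp <|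
      continuous_subtype_val.prodMap continuous_subtype_val).subtype_mk _
  · exact (congrArg _ (slideVector_zero _)).trans (pushforward_pushforward hι Sum.inl_injective _)
  · exact (congrArg _ (slideVector_one _)).trans (pushforward_pushforward hι Sum.inr_injective _)

end Homotopy

theorem exists_injective_forall_notMem {E F : Type*} [Finite E] [Infinite F] {S : Set F}
    (hS : S.Finite) : ∃ γ : E → F, Injective γ ∧ ∀ e, γ e ∉ S := by
  have : Infinite (Sᶜ : Set F) := hS.infinite_compl.to_subtype
  obtain ⟨ι⟩ := nonempty_embedding_nat E
  exact ⟨fun e => Infinite.natEmbedding (Sᶜ : Set F) (ι e),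
    Subtype.val_injective.comp ((Infinite.natEmbedding _).injective.comp ι.injective),
    fun e => (Infinite.natEmbedding (Sᶜ : Set F) (ι e)).2⟩

theorem statement5_general {E : Type*} [Fintype E] (d : ℕ)
    (α β : E → ℕ) (hα : Function.Injective α) (hβ : Function.Injective β) :
    ∀ f g : C(↥(Mt d E), ↥(MtN d)),
      (∀ Φ : ↥(Mt d E), (f Φ : (Fin d → ℕ) → ℝ) = pushforward α (Φ : (Fin d → E) → ℝ)) →
      (∀ Φ : ↥(Mt d E), (g Φ : (Fin d → ℕ) → ℝ) = pushforward β (Φ : (Fin d → E) → ℝ)) →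
      Nonempty (f.Homotopy g) := by
  intro f g hf hg
  obtain rfl : f = pushforwardMap hα := ContinuousMap.ext fun Φ => Subtype.ext (hf Φ)
  obtain rfl : g = pushforwardMap hβ := ContinuousMap.ext fun Φ => Subtype.ext (hg Φ)
  obtain ⟨γ, hγ, hγS⟩ := exists_injective_forall_notMem (E := E)
    ((Set.finite_range α).union (Set.finite_range β))
  have hαγ : ∀ a b, α a ≠ γ b := fun a b h => hγS b (Or.inl ⟨a, h⟩)
  have hβγ : ∀ a b, β a ≠ γ b := fun a b h => hγS b (Or.inr ⟨a, h⟩)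
  exact (homotopic_pushforwardMap hα hγ hαγ).trans (homotopic_pushforwardMap hβ hγ hβγ).symm

theorem statement5 {E : Type*} [Fintype E] (d : ℕ) (hd : 1 ≤ d)
    (α β : E → ℕ) (hα : Function.Injective α) (hβ : Function.Injective β)
    (hcα : (Set.range α)ᶜ.Infinite) (hcβ : (Set.range β)ᶜ.Infinite) :
    ∀ f g : C(↥(Mt d E), ↥(MtN d)),
      (∀ Φ : ↥(Mt d E), (f Φ : (Fin d → ℕ) → ℝ) = pushforward α (Φ : (Fin d → E) → ℝ)) →
      (∀ Φ : ↥(Mt d E), (g Φ : (Fin d → ℕ) → ℝ) = pushforward β (Φ : (Fin d → E) → ℝ)) →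
      Nonempty (f.Homotopy g) :=
  statement5_general d α β hα hβ
end
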